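/- Over the fraction field Q of R, there is a direct sum decomposition of Q-bimodules Q ⊗_{Q^s} Q ≅ Q ⊕ Q_s, where Q_s denotes Q with right action twisted by s. -/

import Mathlib

open MvPolynomial

/-- The linear polynomial in `R = Sym(𝔥*)` corresponding to the element of `𝔥*`
with coordinates `φ` (identifying `𝔥` with `Fin n → k` so that `𝔥*` has dual basis
corresponding to the variables `X i`). -/
noncomputable def lin {k : Type*} [CommRing k] {n : ℕ} (φ : Fin n → k) :
    MvPolynomial (Fin n) k :=
  ∑ i, C (φ i) * X i

/-- The reflection `s` acting on `R = Sym(𝔥*)`, induced by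
`s(γ) = γ - ⟨α^∨, γ⟩·α` on `𝔥*`, where `α^∨ ∈ 𝔥` has coordinates `αv` and
`α ∈ 𝔥*` has coordinates `α`. -/
noncomputable def sRefl {k : Type*} [CommRing k] {n : ℕ} (αv α : Fin n → k) :
    MvPolynomial (Fin n) k →ₐ[k] MvPolynomial (Fin n) k :=
  aeval (fun i => X i - C (αv i) * lin α)

open scoped TensorProduct

/-! Since `⟨α^∨, α⟩ = 2`, the automorphism `σ` is an involution, and for `⟨α^∨, δ⟩ = 1` it sends
`lin δ` to `lin δ - α`, where `α ≠ 0`. For an involution `σ` of a field `Q` moving some `δ`, every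
`g` splits as `(g - b δ) + b δ` with `b = (g - σ g) / (δ - σ δ)` and both coefficients
`σ`-invariant, so every tensor in `Q ⊗_{Q^σ} Q` has the form `x ⊗ 1 + y ⊗ δ`. The algebra map
`f ⊗ g ↦ (f g, f σ(g))` sends it to `(x + y δ, x + y σ δ)`, an invertible change of coordinates
since `δ - σ δ ≠ 0`; being multiplicative, it intertwines right multiplication by `1 ⊗ g` with
that by `(g, σ g)`. -/

section Reflection

variable {k : Type*} [CommRing k] {n : ℕ}

lemma sRefl_lin (αv α φ : Fin n → k) :
    sRefl αv α (lin φ) = lin φ - C (∑ i, αv i * φ i) * lin α := by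
  simp only [lin, map_sum, map_mul, Finset.sum_mul, ← Finset.sum_sub_distrib, sRefl, aeval_C,
    aeval_X, MvPolynomial.algebraMap_eq]
  exact Finset.sum_congr rfl fun i _ => by ring

lemma sRefl_lin_self {αv α : Fin n → k} (hpair : ∑ i, αv i * α i = 2) :
    sRefl αv α (lin α) = -lin α := by
  rw [sRefl_lin, hpair, map_ofNat]
  ring

lemma sRefl_involutive {αv α : Fin n → k} (hpair : ∑ i, αv i * α i = 2) :
    Function.Involutive (sRefl αv α) := by
  have h : (sRefl αv α).comp (sRefl αv α) = AlgHom.id k _ := by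
    refine MvPolynomial.algHom_ext fun i => ?_
    have hX : sRefl αv α (X i) = X i - C (αv i) * lin α := aeval_X _ i
    rw [AlgHom.comp_apply, hX, map_sub, map_mul, hX, sRefl_lin_self hpair, AlgHom.id_apply,
      show sRefl αv α (C (αv i)) = C (αv i) from aeval_C _ _]
    ring
  exact AlgHom.congr_fun h

lemma eval_lin (φ v : Fin n → k) : eval v (lin φ) = ∑ i, φ i * v i := by
  simp [lin]

lemma lin_ne_zero [Nontrivial k] {φ v : Fin n → k} (h : ∑ i, φ i * v i = 1) : lin φ ≠ 0 :=
  fun h0 => one_ne_zero (by rw [← h, ← eval_lin, h0, map_zero])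

end Reflection

lemma IsFractionRing.involutive_of_algebraMap {R K F : Type*} [CommRing R] [Field K]
    [Algebra R K] [IsFractionRing R K] [FunLike F K K] [RingHomClass F K K] {σ : F} {τ : R → R}
    (hτ : Function.Involutive τ) (hσ : ∀ r, σ (algebraMap R K r) = algebraMap R K (τ r)) :
    Function.Involutive σ := by
  have h : (σ : K →+* K).comp σ = RingHom.id K :=
    IsLocalization.ringHom_ext (nonZeroDivisors R) <| RingHom.ext fun r => by simp [hσ, hτ r]
  exact RingHom.congr_fun h

namespace AlgEquiv

variable {k Q : Type*} [CommRing k] [Field Q] [Algebra k Q] (σ : Q ≃ₐ[k] Q)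

local notation "Qσ" => AlgHom.equalizer σ.toAlgHom (AlgHom.id k Q)

def toAlgHomOverFixed : Q →ₐ[Qσ] Q where
  __ := σ.toRingHom
  commutes' c := c.2

noncomputable def tensorFixedToProd : Q ⊗[Qσ] Q →ₐ[Q] Q × Q :=
  Algebra.TensorProduct.lift (Algebra.ofId Q (Q × Q))
    ((AlgHom.id _ Q).prod σ.toAlgHomOverFixed) fun _ _ => Commute.all _ _

@[simp]
lemma tensorFixedToProd_tmul (f g : Q) : σ.tensorFixedToProd (f ⊗ₜ g) = (f * g, f * σ g) := by
  simp [tensorFixedToProd, toAlgHomOverFixed, Algebra.TensorProduct.lift_tmul]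

lemma tensorFixedToProd_mul_one_tmul (x : Q ⊗[Qσ] Q) (g : Q) :
    σ.tensorFixedToProd (x * (1 ⊗ₜ g)) =
      ((σ.tensorFixedToProd x).1 * g, (σ.tensorFixedToProd x).2 * σ g) := by
  rw [map_mul, tensorFixedToProd_tmul, one_mul, one_mul]
  rfl

variable {σ}

lemma exists_eq_add_mul_of_apply_ne (hσ : Function.Involutive σ) {δ : Q} (hδ : σ δ ≠ δ) (g : Q) :
    ∃ a b : Qσ, g = a + b * δ := by
  have hd : δ - σ δ ≠ 0 := sub_ne_zero.mpr hδ.symm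
  set b := (g - σ g) / (δ - σ δ) with hb
  have hbσ : σ b = b := by
    rw [hb, map_div₀, map_sub, map_sub, hσ, hσ, ← neg_sub g, ← neg_sub δ, neg_div_neg_eq]
  have hbd : b * (δ - σ δ) = g - σ g := div_mul_cancel₀ _ hd
  have haσ : σ (g - b * δ) = g - b * δ := by
    rw [map_sub, map_mul, hbσ]
    linear_combination hbd
  exact ⟨⟨g - b * δ, haσ⟩, ⟨b, hbσ⟩, by simp⟩

lemma exists_eq_tmul_one_add_tmul (hσ : Function.Involutive σ) {δ : Q} (hδ : σ δ ≠ δ)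
    (t : Q ⊗[Qσ] Q) : ∃ x y : Q, t = x ⊗ₜ 1 + y ⊗ₜ δ := by
  induction t using TensorProduct.induction_on with
  | zero => exact ⟨0, 0, by simp⟩
  | tmul f g =>
    obtain ⟨a, b, rfl⟩ := exists_eq_add_mul_of_apply_ne hσ hδ g
    refine ⟨a * f, b * f, ?_⟩
    have key (c : Qσ) (x : Q) : f ⊗ₜ[Qσ] ((c : Q) * x) = ((c : Q) * f) ⊗ₜ x :=
      (TensorProduct.smul_tmul c f x).symm
    rw [TensorProduct.tmul_add, ← key, ← key, mul_one]
  | add x y hx hy =>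
    obtain ⟨x₁, y₁, rfl⟩ := hx
    obtain ⟨x₂, y₂, rfl⟩ := hy
    exact ⟨x₁ + x₂, y₁ + y₂, by simp only [TensorProduct.add_tmul]; abel⟩

lemma tensorFixedToProd_injective (hσ : Function.Involutive σ) {δ : Q} (hδ : σ δ ≠ δ) :
    Function.Injective σ.tensorFixedToProd := by
  refine (injective_iff_map_eq_zero _).mpr fun t ht => ?_
  obtain ⟨x, y, rfl⟩ := exists_eq_tmul_one_add_tmul hσ hδ t
  simp only [map_add, tensorFixedToProd_tmul, map_one, mul_one, Prod.mk_add_mk,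
    Prod.mk_eq_zero] at ht
  obtain ⟨h₁, h₂⟩ := ht
  have hy : y = 0 := by
    have : y * (δ - σ δ) = 0 := by linear_combination h₁ - h₂
    exact (mul_eq_zero.mp this).resolve_right (sub_ne_zero.mpr hδ.symm)
  have hx : x = 0 := by simpa [hy] using h₁
  simp [hx, hy]

lemma tensorFixedToProd_surjective {δ : Q} (hδ : σ δ ≠ δ) :
    Function.Surjective σ.tensorFixedToProd := by
  rintro ⟨u, v⟩
  set y := (u - v) / (δ - σ δ)
  have hy : y * (δ - σ δ) = u - v := div_mul_cancel₀ _ (sub_ne_zero.mpr hδ.symm)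
  refine ⟨(u - y * δ) ⊗ₜ 1 + y ⊗ₜ δ, ?_⟩
  simp only [map_add, tensorFixedToProd_tmul, map_one, mul_one, Prod.mk_add_mk, Prod.mk.injEq]
  constructor
  · ring
  · linear_combination -hy

end AlgEquiv

/-- Over the fraction field `Q` of `R`, there is a direct sum
decomposition of `Q`-bimodules `Q ⊗_{Q^s} Q ≅ Q ⊕ Q_s`, where `Q_s` denotes `Q` with
the right action twisted by `s` (here given by the automorphism `σ` extending `s`).
The two projections are `f ⊗ g ↦ f·g` and `f ⊗ g ↦ f·σ(g)`, and together they give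
a bijection onto `Q × Q` compatible with the (twisted) right actions. -/
theorem Q_tensor_decomposition {k : Type*} [CommRing k] [IsDomain k] {n : ℕ}
    (αv α : Fin n → k) (hpair : ∑ i, αv i * α i = 2)
    (hDS1 : ∃ δ : Fin n → k, ∑ i, αv i * δ i = 1)
    (hDS2 : ∃ v : Fin n → k, ∑ i, α i * v i = 1)
    (σ : FractionRing (MvPolynomial (Fin n) k) ≃ₐ[k] FractionRing (MvPolynomial (Fin n) k))
    (hσ : ∀ r : MvPolynomial (Fin n) k,
      σ (algebraMap (MvPolynomial (Fin n) k) (FractionRing (MvPolynomial (Fin n) k)) r) =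
        algebraMap (MvPolynomial (Fin n) k) (FractionRing (MvPolynomial (Fin n) k))
          (sRefl αv α r)) :
    ∃ p : (FractionRing (MvPolynomial (Fin n) k)
          ⊗[↥(AlgHom.equalizer σ.toAlgHom (AlgHom.id k (FractionRing (MvPolynomial (Fin n) k))))]
          FractionRing (MvPolynomial (Fin n) k)) →ₗ[k]
        (FractionRing (MvPolynomial (Fin n) k) × FractionRing (MvPolynomial (Fin n) k)),
      (∀ f g : FractionRing (MvPolynomial (Fin n) k),
        p (f ⊗ₜ g) = (f * g, f * σ g)) ∧
      (∀ (x : FractionRing (MvPolynomial (Fin n) k)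
            ⊗[↥(AlgHom.equalizer σ.toAlgHom
                (AlgHom.id k (FractionRing (MvPolynomial (Fin n) k))))]
            FractionRing (MvPolynomial (Fin n) k))
          (g : FractionRing (MvPolynomial (Fin n) k)),
        p (x * ((1 : FractionRing (MvPolynomial (Fin n) k)) ⊗ₜ g)) =
          ((p x).1 * g, (p x).2 * σ g)) ∧
      Function.Bijective p := by
  obtain ⟨δ, hδ⟩ := hDS1
  obtain ⟨v, hv⟩ := hDS2
  have hσσ : Function.Involutive σ :=
    IsFractionRing.involutive_of_algebraMap (sRefl_involutive hpair) hσ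
  have hmoved : σ (algebraMap _ _ (lin δ)) ≠ algebraMap _ _ (lin δ) := by
    rw [hσ, sRefl_lin, hδ, map_one, one_mul, map_sub, Ne, sub_eq_self,
      IsFractionRing.to_map_eq_zero_iff]
    exact lin_ne_zero hv
  refine ⟨(σ.tensorFixedToProd.restrictScalars k).toLinearMap, σ.tensorFixedToProd_tmul,
    σ.tensorFixedToProd_mul_one_tmul, σ.tensorFixedToProd_injective hσσ hmoved,
    σ.tensorFixedToProd_surjective hmoved⟩
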